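/- arXiv:1012.3636 — 3 statements merged into one kernel-verified Lean document; each statement's English description precedes it below -/
import Mathlib

section
/- For any probability mass function f on ℤ (f : ℤ → [0,∞) with Σ_{k∈ℤ} f(k) = 1), one has Σ_{k∈ℤ} min(f(k), f(k+1)) < 1. -/
/-- For any probability mass function `f` on `ℤ`, `∑ₖ min(f k, f (k+1)) < 1`. -/
theorem tsum_min_shift_lt_one (f : ℤ → ℝ) (hf : ∀ k, 0 ≤ f k)
    (hsum : ∑' k : ℤ, f k = 1) :
    ∑' k : ℤ, min (f k) (f (k + 1)) < 1 := by
  have hS : Summable f := by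
    by_contra h
    rw [tsum_eq_zero_of_not_summable h] at hsum
    norm_num at hsum
  have hle : ∀ k, min (f k) (f (k + 1)) ≤ f k := fun k => min_le_left _ _
  -- there exists k with strict inequality
  have hstrict : ∃ k, min (f k) (f (k + 1)) < f k := by
    by_contra h
    push_neg at h
    have hmono : Monotone f := by
      apply monotone_int_of_le_succ
      intro n
      have := h n
      exact le_min_iff.mp this |>.2
    have hzero : ∀ k, f k = 0 := by
      intro k
      have htend : Filter.Tendsto f Filter.atTop (nhds 0) := hS.tendsto_cofinite_zero.mono_left Filter.atTop_le_cofinite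
      have : ∀ n ≥ k, f k ≤ f n := fun n hn => hmono hn
      have hk : f k ≤ 0 :=
        ge_of_tendsto htend (Filter.eventually_atTop.mpr ⟨k, this⟩)
      exact le_antisymm hk (hf k)
    rw [tsum_congr hzero] at hsum
    simp at hsum
  obtain ⟨i, hi⟩ := hstrict
  calc ∑' k : ℤ, min (f k) (f (k + 1)) < ∑' k : ℤ, f k := by
        refine Summable.tsum_lt_tsum hle hi ?_ hS
        exact Summable.of_nonneg_of_le (fun k => le_min (hf k) (hf (k+1))) hle hS
    _ = 1 := hsum
end

section
/- For fixed 0 < ϑ < 1, define ψ(θ) = ((1−ϑ)/(1−θ))^{1−θ} · (ϑ/θ)^{θ} for 0 < θ ≤ ϑ. Then ψ(ϑ) = 1, lim_{θ→0⁺} ψ(θ) = 1 − ϑ, and ψ is nondecreasing on (0, ϑ]. -/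
/-!
With `D(θ‖ϑ)` the relative entropy of Bernoulli(θ) with respect to Bernoulli(ϑ), taking logarithms
gives `ψ θ = exp (-D(θ‖ϑ))`. Since `D(θ‖ϑ) = -H(θ) - θ log ϑ - (1-θ) log (1-ϑ)` with `H` the
binary entropy, `θ ↦ D(θ‖ϑ)` is continuous on all of `ℝ`, vanishes at `ϑ`, equals `-log (1-ϑ)`
at `0`, and has derivative `log (θ/(1-θ)) - log (ϑ/(1-ϑ)) ≤ 0` for `0 < θ < ϑ`.
-/

open Filter Real Set Topology

noncomputable def bernoulliKL (θ ϑ : ℝ) : ℝ :=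
  -binEntropy θ - θ * log ϑ - (1 - θ) * log (1 - ϑ)

@[simp]
lemma bernoulliKL_self (ϑ : ℝ) : bernoulliKL ϑ ϑ = 0 := by
  simp only [bernoulliKL, binEntropy, log_inv]
  ring

@[simp]
lemma bernoulliKL_zero_left (ϑ : ℝ) : bernoulliKL 0 ϑ = -log (1 - ϑ) := by
  simp [bernoulliKL]

lemma continuous_bernoulliKL_left (ϑ : ℝ) : Continuous fun θ ↦ bernoulliKL θ ϑ := by
  unfold bernoulliKL
  fun_prop

lemma hasDerivAt_bernoulliKL_left {θ : ℝ} (ϑ : ℝ) (hθ₀ : θ ≠ 0) (hθ₁ : θ ≠ 1) :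
    HasDerivAt (fun θ ↦ bernoulliKL θ ϑ)
      (log θ - log (1 - θ) - (log ϑ - log (1 - ϑ))) θ := by
  have h := (((hasDerivAt_binEntropy hθ₀ hθ₁).neg.sub (hasDerivAt_mul_const (log ϑ))).sub
    ((hasDerivAt_id θ).const_sub 1 |>.mul_const (log (1 - ϑ))))
  exact h.congr_deriv (by ring)

lemma antitoneOn_bernoulliKL_left {ϑ : ℝ} (hϑ : ϑ < 1) :
    AntitoneOn (fun θ ↦ bernoulliKL θ ϑ) (Icc 0 ϑ) := by
  have hderiv : ∀ θ ∈ Ioo 0 ϑ, HasDerivAt (fun θ ↦ bernoulliKL θ ϑ)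
      (log θ - log (1 - θ) - (log ϑ - log (1 - ϑ))) θ := fun θ hθ ↦
    hasDerivAt_bernoulliKL_left ϑ hθ.1.ne' (hθ.2.trans hϑ).ne
  refine antitoneOn_of_deriv_nonpos (convex_Icc 0 ϑ) (continuous_bernoulliKL_left ϑ).continuousOn
    ?_ ?_
  · rw [interior_Icc]
    exact fun θ hθ ↦ (hderiv θ hθ).differentiableAt.differentiableWithinAt
  · rw [interior_Icc]
    intro θ hθ
    rw [(hderiv θ hθ).deriv]
    obtain ⟨hθ₀, hθϑ⟩ := hθ
    have hlog : log θ ≤ log ϑ := log_le_log hθ₀ hθϑ.le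
    have hlog_one_sub : log (1 - ϑ) ≤ log (1 - θ) := log_le_log (by linarith) (by linarith)
    linarith

lemma exp_neg_bernoulliKL {θ ϑ : ℝ} (hθ₀ : 0 < θ) (hθ₁ : θ < 1) (hϑ₀ : 0 < ϑ) (hϑ₁ : ϑ < 1) :
    exp (-bernoulliKL θ ϑ) = ((1 - ϑ) / (1 - θ)) ^ (1 - θ) * (ϑ / θ) ^ θ := by
  have h1θ : 0 < 1 - θ := by linarith
  have h1ϑ : 0 < 1 - ϑ := by linarith
  rw [rpow_def_of_pos (div_pos h1ϑ h1θ), rpow_def_of_pos (div_pos hϑ₀ hθ₀), ← exp_add,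
    log_div h1ϑ.ne' h1θ.ne', log_div hϑ₀.ne' hθ₀.ne']
  congr 1
  simp only [bernoulliKL, binEntropy, log_inv]
  ring

/-- Properties of `ψ(θ) = ((1-ϑ)/(1-θ))^{1-θ} (ϑ/θ)^θ` on `(0, ϑ]`:
`ψ(ϑ) = 1`, `ψ(θ) → 1 - ϑ` as `θ → 0⁺`, and `ψ` is nondecreasing on `(0, ϑ]`. -/
theorem psi_properties (ϑ : ℝ) (hϑ0 : 0 < ϑ) (hϑ1 : ϑ < 1)
    (ψ : ℝ → ℝ)
    (hψ : ∀ θ : ℝ, 0 < θ → θ ≤ ϑ →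
      ψ θ = ((1 - ϑ) / (1 - θ)) ^ (1 - θ) * (ϑ / θ) ^ θ) :
    ψ ϑ = 1 ∧
    Tendsto ψ (nhdsWithin 0 (Set.Ioi 0)) (nhds (1 - ϑ)) ∧
    MonotoneOn ψ (Set.Ioc 0 ϑ) := by
  have hψ_eq : EqOn (fun θ ↦ exp (-bernoulliKL θ ϑ)) ψ (Ioc 0 ϑ) := fun θ hθ ↦ by
    rw [hψ θ hθ.1 hθ.2]
    exact exp_neg_bernoulliKL hθ.1 (hθ.2.trans_lt hϑ1) hϑ0 hϑ1
  refine ⟨by simpa using (hψ_eq ⟨hϑ0, le_rfl⟩).symm, ?_, ?_⟩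
  · have hlim : Tendsto (fun θ ↦ exp (-bernoulliKL θ ϑ)) (𝓝 0) (𝓝 (1 - ϑ)) := by
      refine ((continuous_bernoulliKL_left ϑ).neg.rexp).tendsto' 0 (1 - ϑ) ?_
      simp [exp_log (sub_pos.2 hϑ1)]
    exact (hlim.mono_left nhdsWithin_le_nhds).congr'
      (eventually_of_mem (Ioc_mem_nhdsGT hϑ0) hψ_eq)
  · have hanti := (antitoneOn_bernoulliKL_left hϑ1).mono Ioc_subset_Icc_self
    refine MonotoneOn.congr ?_ hψ_eq
    exact fun x hx y hy hxy ↦ exp_le_exp.2 (neg_le_neg (hanti hx hy hxy))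
end

section
/- Let B_n > B_m > 0 and b_n, b_m be real numbers. Then | b_n² − (√(B_n)·b_n − √(B_m)·b_m)² / (B_n − B_m) | ≤ ( 2(b_n² + b_m²) + 2|b_n||b_m|·(√(B_n/B_m) − 1) ) / ( (B_n/B_m) − 1 ). -/
/-- Algebraic inequality: for `B_n > B_m > 0` and reals `b_n, b_m`,
`|b_n² - (√B_n b_n - √B_m b_m)²/(B_n - B_m)|
  ≤ (2(b_n² + b_m²) + 2|b_n||b_m|(√(B_n/B_m) - 1)) / (B_n/B_m - 1)`. -/
theorem quadratic_ratio_bound (Bn Bm bn bm : ℝ) (hBm : 0 < Bm) (hBnm : Bm < Bn) :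
    |bn ^ 2 - (Real.sqrt Bn * bn - Real.sqrt Bm * bm) ^ 2 / (Bn - Bm)| ≤
      (2 * (bn ^ 2 + bm ^ 2) + 2 * |bn| * |bm| * (Real.sqrt (Bn / Bm) - 1)) /
        (Bn / Bm - 1) := by
  set s := Real.sqrt Bn with hs
  set t := Real.sqrt Bm with ht
  have hBn0 : (0:ℝ) < Bn := hBm.trans hBnm
  have hs2 : s ^ 2 = Bn := Real.sq_sqrt hBn0.le
  have ht2 : t ^ 2 = Bm := Real.sq_sqrt hBm.le
  have ht0 : (0:ℝ) < t := Real.sqrt_pos.mpr hBm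
  have hst : t < s := Real.sqrt_lt_sqrt hBm.le hBnm
  have hD : (0:ℝ) < Bn - Bm := by linarith
  have hsd : Real.sqrt (Bn / Bm) = s / t := Real.sqrt_div hBn0.le Bm
  have hLHS : bn ^ 2 - (s * bn - t * bm) ^ 2 / (Bn - Bm)
      = (t * (2 * s * bn * bm - t * (bn ^ 2 + bm ^ 2))) / (Bn - Bm) := by
    field_simp
    linear_combination (bn ^ 2) * ht2 - (bn ^ 2) * hs2
  have hRHS : (2 * (bn ^ 2 + bm ^ 2) + 2 * |bn| * |bm| * (Real.sqrt (Bn / Bm) - 1)) /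
        (Bn / Bm - 1)
      = (2 * t ^ 2 * (bn ^ 2 + bm ^ 2) + 2 * |bn| * |bm| * t * (s - t)) / (Bn - Bm) := by
    rw [hsd, ← hs2, ← ht2]
    have hts : t ^ 2 < s ^ 2 := by nlinarith
    have h1 : (0:ℝ) < s ^ 2 / t ^ 2 - 1 := by
      rw [sub_pos, lt_div_iff₀ (by positivity)]; linarith
    have h2 : s ^ 2 - t ^ 2 ≠ 0 := by nlinarith
    rw [div_eq_div_iff h1.ne' h2]
    field_simp
  rw [hLHS, hRHS, abs_div, abs_of_pos hD]
  gcongr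
  have h1 : |2 * s * bn * bm - t * (bn ^ 2 + bm ^ 2)|
      ≤ 2 * s * (|bn| * |bm|) + t * (bn ^ 2 + bm ^ 2) := by
    calc |2 * s * bn * bm - t * (bn ^ 2 + bm ^ 2)|
        ≤ |2 * s * bn * bm| + |t * (bn ^ 2 + bm ^ 2)| := abs_sub _ _
      _ = 2 * s * (|bn| * |bm|) + t * (bn ^ 2 + bm ^ 2) := by
          simp only [abs_mul, abs_two, abs_of_pos ht0, abs_of_pos (ht0.trans hst),
            abs_of_nonneg (show (0:ℝ) ≤ bn ^ 2 + bm ^ 2 by positivity)]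
          ring
  rw [abs_mul, abs_of_pos ht0]
  nlinarith [mul_le_mul_of_nonneg_left h1 ht0.le,
    mul_nonneg (mul_nonneg ht0.le ht0.le) (sq_nonneg (|bn| - |bm|)),
    sq_abs bn, sq_abs bm]
end
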